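/- Let P be a perfect poset and let 𝒜 ⊆ P be predense in P, i.e., every element of P is compatible in P with some element of 𝒜. Then for every T ∈ P, every m ∈ ℕ, and every node s of T of length m, there exist T̄ ∈ P and A ∈ 𝒜 such that T̄ ⊆ T, T̄ has exactly the same nodes of length m as T, and T̄_s ⊆ A. -/

import Mathlib

/-- A tree: a set of finite binary strings closed under initial segments (prefixes). -/
def IsTree (T : Set (List Bool)) : Prop :=
  ∀ ⦃s t : List Bool⦄, s <+: t → t ∈ T → s ∈ T

/-- A node `t` splits in a set `A` of strings if both one-step extensions belong to `A`. -/
def Splits (A : Set (List Bool)) (t : List Bool) : Prop :=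
  t ++ [false] ∈ A ∧ t ++ [true] ∈ A

/-- A perfect tree: a nonempty tree each of whose elements has a splitting extension in it. -/
def IsPerfect (T : Set (List Bool)) : Prop :=
  T.Nonempty ∧ IsTree T ∧ ∀ s ∈ T, ∃ t ∈ T, s <+: t ∧ Splits T t

/-- The cone `C_s`: all strings comparable with `s`. -/
def Cone (s : List Bool) : Set (List Bool) :=
  {t | s <+: t ∨ t <+: s}

/-- `T_s`: the elements of `T` comparable with `s`. -/
def restrictTo (T : Set (List Bool)) (s : List Bool) : Set (List Bool) :=
  {t ∈ T | s <+: t ∨ t <+: s}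

/-- The meet `A ∧ B`: the union of all perfect trees contained in `A ∩ B`. -/
def meet (A B : Set (List Bool)) : Set (List Bool) :=
  ⋃₀ {U | IsPerfect U ∧ U ⊆ A ∩ B}

/-- A perfect poset: a collection of perfect trees containing all cones and
closed under unions and (nonempty) meets. -/
def PerfectPoset (P : Set (Set (List Bool))) : Prop :=
  (∀ T ∈ P, IsPerfect T) ∧
  (∀ s : List Bool, Cone s ∈ P) ∧
  (∀ T ∈ P, ∀ S ∈ P, T ∪ S ∈ P) ∧
  (∀ T ∈ P, ∀ S ∈ P, meet T S ≠ ∅ → meet T S ∈ P)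

/-- `T` and `S` are compatible in `P` if some `U ∈ P` is contained in both. -/
def CompatIn (P : Set (Set (List Bool))) (T S : Set (List Bool)) : Prop :=
  ∃ U ∈ P, U ⊆ T ∧ U ⊆ S

/-!
Shrink `T_s` to a condition `U ∈ P` below some `a ∈ 𝒜` (possible since `T_s = T ∧ C_s ∈ P`),
and graft `U` back onto `T` in place of `T_s`: the result is `U` together with the finitely many
cones `T_t` over the other nodes `t` of length `m`, which lies in `P` by closure under unions.
A perfect `U ⊆ C_s` contains `s`, so no node of length `m` is lost, and a string comparable with
`s` and with another node of the same length is a prefix of `s`, so `T̄_s ⊆ U ⊆ a`.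
-/

lemma List.eq_of_prefix_of_comparable {α : Type*} {s t x : List α} (hsx : s <+: x)
    (htx : t <+: x ∨ x <+: t) (hlen : s.length = t.length) : s = t := by
  rcases htx with htx | hxt
  · exact (List.prefix_of_prefix_length_le hsx htx hlen.le).eq_of_length hlen
  · exact (hsx.trans hxt).eq_of_length hlen

lemma restrictTo_eq_inter (T : Set (List Bool)) (s : List Bool) :
    restrictTo T s = T ∩ Cone s :=
  rfl

lemma isTree_cone (s : List Bool) : IsTree (Cone s) := by
  rintro u t hut (hst | hts)
  · exact List.prefix_or_prefix_of_prefix hst hut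
  · exact .inr (hut.trans hts)

lemma IsTree.inter {T S : Set (List Bool)} (hT : IsTree T) (hS : IsTree S) : IsTree (T ∩ S) :=
  fun _ _ hut ht => ⟨hT hut ht.1, hS hut ht.2⟩

lemma isPerfect_restrictTo {T : Set (List Bool)} (hT : IsPerfect T) {s : List Bool}
    (hs : s ∈ T) : IsPerfect (restrictTo T s) := by
  obtain ⟨-, htree, hsplit⟩ := hT
  have splits_above : ∀ u ∈ T, s <+: u →
      ∃ t ∈ restrictTo T s, u <+: t ∧ Splits (restrictTo T s) t := by
    intro u hu hsu
    obtain ⟨t, ht, hut, hfalse, htrue⟩ := hsplit u hu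
    have hst : s <+: t := hsu.trans hut
    exact ⟨t, ⟨ht, .inl hst⟩, hut, ⟨hfalse, .inl (hst.trans (List.prefix_append _ _))⟩,
      ⟨htrue, .inl (hst.trans (List.prefix_append _ _))⟩⟩
  refine ⟨⟨s, hs, .inl (List.prefix_refl s)⟩, ?_, ?_⟩
  · rw [restrictTo_eq_inter]
    exact htree.inter (isTree_cone s)
  · rintro u ⟨hu, hsu | hus⟩
    · exact splits_above u hu hsu
    · obtain ⟨t, ht, hst, hsplits⟩ := splits_above s hs (List.prefix_refl s)
      exact ⟨t, ht, hus.trans hst, hsplits⟩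

lemma IsPerfect.exists_le_length {T : Set (List Bool)} (hT : IsPerfect T) (n : ℕ) :
    ∃ t ∈ T, n ≤ t.length := by
  induction n with
  | zero => exact hT.1.imp fun t ht => ⟨ht, Nat.zero_le _⟩
  | succ n ih =>
    obtain ⟨u, hu, hn⟩ := ih
    obtain ⟨t, -, hut, hsplits, -⟩ := hT.2.2 u hu
    refine ⟨t ++ [false], hsplits, ?_⟩
    have := hut.length_le
    simp only [List.length_append, List.length_singleton]
    omega

lemma IsPerfect.mem_of_subset_cone {U : Set (List Bool)} (hU : IsPerfect U) {s : List Bool}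
    (hUs : U ⊆ Cone s) : s ∈ U := by
  obtain ⟨u, hu, hlen⟩ := hU.exists_le_length s.length
  rcases hUs hu with hsu | hus
  · exact hU.2.1 hsu hu
  · rwa [← hus.eq_of_length (le_antisymm hus.length_le hlen)]

lemma meet_eq_inter_of_isPerfect {A B : Set (List Bool)} (h : IsPerfect (A ∩ B)) :
    meet A B = A ∩ B :=
  (Set.sUnion_subset fun _ hU => hU.2).antisymm (Set.subset_sUnion_of_mem ⟨h, subset_rfl⟩)

lemma SupClosed.union_biUnion_mem {α ι : Type*} {P : Set (Set α)} (hP : SupClosed P)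
    {U : Set α} (hU : U ∈ P) {F : Set ι} (hF : F.Finite) {f : ι → Set α}
    (hf : ∀ i ∈ F, f i ∈ P) : U ∪ ⋃ i ∈ F, f i ∈ P := by
  induction F, hF using Set.Finite.induction_on with
  | empty => simpa using hU
  | @insert i F _ _ ih =>
    rw [Set.biUnion_insert, Set.union_left_comm, Set.union_comm]
    exact hP (ih fun j hj => hf j (Set.mem_insert_of_mem i hj)) (hf i (Set.mem_insert i F))

namespace PerfectPoset

variable {P : Set (Set (List Bool))}

lemma supClosed (hP : PerfectPoset P) : SupClosed P :=
  fun _ hT _ hS => hP.2.2.1 _ hT _ hS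

lemma restrictTo_mem (hP : PerfectPoset P) {T : Set (List Bool)} (hT : T ∈ P)
    {s : List Bool} (hs : s ∈ T) : restrictTo T s ∈ P := by
  have hperf : IsPerfect (T ∩ Cone s) := isPerfect_restrictTo (hP.1 T hT) hs
  have hmeet := meet_eq_inter_of_isPerfect hperf
  rw [restrictTo_eq_inter, ← hmeet]
  exact hP.2.2.2 T hT (Cone s) (hP.2.1 s) (hmeet ▸ hperf.1.ne_empty)

end PerfectPoset

def graft (T : Set (List Bool)) (s : List Bool) (U : Set (List Bool)) : Set (List Bool) :=
  U ∪ ⋃ t ∈ {t ∈ T | t.length = s.length ∧ t ≠ s}, restrictTo T t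

section graft

variable {T U : Set (List Bool)} {s : List Bool}

lemma mem_graft {x : List Bool} :
    x ∈ graft T s U ↔
      x ∈ U ∨ ∃ t ∈ T, t.length = s.length ∧ t ≠ s ∧ x ∈ T ∧ (t <+: x ∨ x <+: t) := by
  simp only [graft, restrictTo, Set.mem_union, Set.mem_iUnion, Set.mem_ofPred_eq, exists_prop,
    and_assoc]

lemma graft_subset (hUT : U ⊆ T) : graft T s U ⊆ T := by
  intro x hx
  rcases mem_graft.1 hx with hxU | ⟨-, -, -, -, hxT, -⟩
  exacts [hUT hxU, hxT]

lemma graft_level_eq (hUT : U ⊆ T) (hs : s ∈ U) :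
    {t ∈ graft T s U | t.length = s.length} = {t ∈ T | t.length = s.length} := by
  refine subset_antisymm (fun x hx => ⟨graft_subset hUT hx.1, hx.2⟩) ?_
  rintro x ⟨hxT, hlen⟩
  refine ⟨mem_graft.2 ?_, hlen⟩
  rcases eq_or_ne x s with rfl | hne
  · exact .inl hs
  · exact .inr ⟨x, hxT, hlen, hne, hxT, .inl (List.prefix_refl x)⟩

lemma restrictTo_graft_subset (hU : IsTree U) (hs : s ∈ U) : restrictTo (graft T s U) s ⊆ U := by
  rintro x ⟨hx, hxs⟩
  rcases mem_graft.1 hx with hxU | ⟨t, -, hlen, hne, -, htx⟩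
  · exact hxU
  · rcases hxs with hsx | hxs
    · exact absurd (List.eq_of_prefix_of_comparable hsx htx hlen.symm).symm hne
    · exact hU hxs hs

lemma PerfectPoset.graft_mem {P : Set (Set (List Bool))} (hP : PerfectPoset P) (hT : T ∈ P)
    (hU : U ∈ P) : graft T s U ∈ P := by
  have hfin : {t ∈ T | t.length = s.length ∧ t ≠ s}.Finite :=
    (List.finite_length_eq Bool s.length).subset fun _ ht => ht.2.1
  exact hP.supClosed.union_biUnion_mem hU hfin fun _ ht => hP.restrictTo_mem hT ht.1

end graft

theorem shrink_into_predense_general (P : Set (Set (List Bool)))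
    (hP : PerfectPoset P) (A : Set (Set (List Bool)))
    (hpre : ∀ T ∈ P, ∃ a ∈ A, CompatIn P T a) :
    ∀ T ∈ P, ∀ m : ℕ, ∀ s ∈ T, s.length = m →
      ∃ Tbar ∈ P, ∃ a ∈ A, Tbar ⊆ T ∧
        {t ∈ Tbar | t.length = m} = {t ∈ T | t.length = m} ∧
        restrictTo Tbar s ⊆ a := by
  rintro T hT _ s hs rfl
  obtain ⟨a, ha, U, hUP, hUTs, hUa⟩ := hpre _ (hP.restrictTo_mem hT hs)
  have hUT : U ⊆ T := fun _ hu => (hUTs hu).1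
  have hU : IsPerfect U := hP.1 U hUP
  have hsU : s ∈ U := hU.mem_of_subset_cone fun _ hu => (hUTs hu).2
  exact ⟨graft T s U, hP.graft_mem hT hUP, a, ha, graft_subset hUT, graft_level_eq hUT hsU,
    (restrictTo_graft_subset hU.2.1 hsU).trans hUa⟩

/-- below any node of any condition one can shrink into an element of
a predense set, preserving the nodes of that length. -/
theorem shrink_into_predense (P : Set (Set (List Bool)))
    (hP : PerfectPoset P) (A : Set (Set (List Bool))) (hAP : A ⊆ P)
    (hpre : ∀ T ∈ P, ∃ a ∈ A, CompatIn P T a) :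
    ∀ T ∈ P, ∀ m : ℕ, ∀ s ∈ T, s.length = m →
      ∃ Tbar ∈ P, ∃ a ∈ A, Tbar ⊆ T ∧
        {t ∈ Tbar | t.length = m} = {t ∈ T | t.length = m} ∧
        restrictTo Tbar s ⊆ a :=
  shrink_into_predense_general P hP A hpre
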